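/- arXiv:2305.02657 — 7 statements merged into one kernel-verified Lean document; each statement's English description precedes it below -/
import Mathlib

section
/- Let k₁, k₂ be two continuous positive definite kernels on a Hausdorff space 𝒳 with Borel measure μ, each with finite trace ∫ k_j(x,x) dμ(x) < ∞. Suppose that λ_i(k₁;𝒳,dμ) ≍ λ_{2i}(k₁;𝒳,dμ) and λ_i(k₂;𝒳,dμ) = O(λ_i(k₁;𝒳,dμ)) as i → ∞. Then λ_i(k₁+k₂;𝒳,dμ) ≍ λ_i(k₁;𝒳,dμ) as i → ∞. -/
open MeasureTheory Filter Asymptotics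

noncomputable section

/-- A (symmetric) positive definite kernel. -/
def IsPosDefKernel {X : Type*} (k : X → X → ℝ) : Prop :=
  (∀ x y, k x y = k y x) ∧
  ∀ (n : ℕ) (x : Fin n → X) (c : Fin n → ℝ),
    0 ≤ ∑ i, ∑ j, c i * c j * k (x i) (x j)

/-- The quadratic form of a kernel on `L²(X, μ)`. -/
def quadForm {X : Type*} [MeasurableSpace X] (k : X → X → ℝ) (μ : Measure X) (f : X → ℝ) : ℝ :=
  ∫ x, ∫ y, k x y * f x * f y ∂μ ∂μ

/-- Courant–Fischer characterization of the `i`-th largest eigenvalue (counted with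
multiplicity, `i = 1, 2, …`) of the integral operator of the kernel `k` on `L²(X, μ)`:
the supremum over `i`-dimensional subspaces `V` of `L²(X, μ)` of the infimum of the
quadratic form of `k` over unit vectors of `V`. -/
def kernelEig {X : Type*} [MeasurableSpace X] (k : X → X → ℝ) (μ : Measure X) (i : ℕ) : ℝ :=
  sSup {t : ℝ | ∃ V : Submodule ℝ (Lp ℝ 2 μ), FiniteDimensional ℝ V ∧ Module.finrank ℝ V = i ∧
        t = sInf {s : ℝ | ∃ f : Lp ℝ 2 μ, f ∈ V ∧ ‖f‖ = 1 ∧ s = quadForm k μ f}}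

/-
Each kernel's quadratic form is a Gram form. The inclusion `J` of the reproducing kernel Hilbert
space of `k` into `L²(μ)` is bounded because `∫ k(x,x) dμ < ∞`, and
`∫∫ k(x,y) f(x) f(y) dμ dμ = ‖J† f‖²`. So the form is nonnegative, bounded on the unit sphere and
additive in the kernel, and `λ_i(k)` is the `i`-th Courant–Fischer value of `f ↦ ‖J† f‖²`.

Monotonicity of Courant–Fischer values gives `λ_i(k₁) ≤ λ_i(k₁ + k₂)`. For the upper bound take
Weyl's inequality `λ_{a+b-1}(k₁ + k₂) ≤ λ_a(k₁) + λ_b(k₂)` with `a = ⌈i/2⌉ ≤ b`, then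
`λ_b(k₂) ≤ C λ_b(k₁) ≤ C λ_a(k₁)` and the doubling condition `λ_a(k₁) ≤ C' λ_{2a}(k₁) ≤ C' λ_i(k₁)`.
Weyl's inequality: on an `(a + b - 1)`-dimensional `V`, diagonalise each Gram form restricted to
`V`. Orthogonally to its first `a - 1` eigenvectors the first form is at most its `a`-th
eigenvalue, which is at most `λ_a` (test the span of the first `a` eigenvectors), likewise for the
second with `b`, and the `a + b - 2` orthogonality constraints still leave a unit vector in `V`.
-/

open scoped RealInnerProductSpace InnerProduct

lemma Submodule.exists_le_finrank_eq {K V : Type*} [DivisionRing K] [AddCommGroup V]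
    [Module K V] (W : Submodule K V) [FiniteDimensional K W] {j : ℕ}
    (hj : j ≤ Module.finrank K W) :
    ∃ U ≤ W, FiniteDimensional K U ∧ Module.finrank K U = j := by
  let b := Module.finBasis K W
  let c : Fin j → V := fun t => b (Fin.castLE hj t)
  have hc : LinearIndependent K c :=
    (b.linearIndependent.map' W.subtype W.ker_subtype).comp _ (Fin.castLE_injective hj)
  refine ⟨Submodule.span K (Set.range c), ?_,
    FiniteDimensional.span_of_finite K (Set.finite_range c), ?_⟩
  · exact Submodule.span_le.2 (Set.range_subset_iff.2 fun t => (b _).2)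
  · rw [finrank_span_eq_card hc, Fintype.card_fin]

lemma Submodule.exists_mem_norm_eq_one {E : Type*} [NormedAddCommGroup E] [NormedSpace ℝ E]
    {V : Submodule ℝ E} (hV : V ≠ ⊥) : ∃ f ∈ V, ‖f‖ = 1 := by
  obtain ⟨f, hfV, hf⟩ := V.exists_mem_ne_zero_of_ne_bot hV
  exact ⟨‖f‖⁻¹ • f, V.smul_mem _ hfV, by simp [norm_smul, hf]⟩

lemma Submodule.exists_mem_norm_eq_one_forall_inner_eq_zero {E : Type*} [NormedAddCommGroup E]
    [InnerProductSpace ℝ E] {V : Submodule ℝ E} [FiniteDimensional ℝ V] {m : ℕ} (c : Fin m → E)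
    (hm : m < Module.finrank ℝ V) :
    ∃ v ∈ V, ‖v‖ = 1 ∧ ∀ i, ⟪c i, v⟫ = 0 := by
  let Φ : V →ₗ[ℝ] Fin m → ℝ := LinearMap.pi fun i => (innerₛₗ ℝ (c i)).comp V.subtype
  have hΦ : LinearMap.ker Φ ≠ ⊥ := LinearMap.ker_ne_bot_of_finrank_lt (by simpa using hm)
  obtain ⟨w, hw, hw₀⟩ := (LinearMap.ker Φ).exists_mem_norm_eq_one hΦ
  exact ⟨w, w.2, hw₀, fun i => congr_fun (LinearMap.mem_ker.1 hw) i⟩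

section CourantFischer

variable {E : Type*} [NormedAddCommGroup E] [InnerProductSpace ℝ E]

def sphereInf (q : E → ℝ) (V : Submodule ℝ E) : ℝ :=
  sInf {s : ℝ | ∃ f : E, f ∈ V ∧ ‖f‖ = 1 ∧ s = q f}

def courantFischer (q : E → ℝ) (i : ℕ) : ℝ :=
  sSup {t : ℝ | ∃ V : Submodule ℝ E, FiniteDimensional ℝ V ∧ Module.finrank ℝ V = i ∧
    t = sphereInf q V}

variable {q q₁ q₂ : E → ℝ} {M : ℝ}

lemma sphereInf_nonneg (hq : 0 ≤ q) (V : Submodule ℝ E) : 0 ≤ sphereInf q V :=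
  Real.sInf_nonneg <| by rintro _ ⟨f, -, -, rfl⟩; exact hq f

lemma sphereInf_le (hq : 0 ≤ q) {V : Submodule ℝ E} {f : E} (hf : f ∈ V) (hf₁ : ‖f‖ = 1) :
    sphereInf q V ≤ q f :=
  csInf_le ⟨0, by rintro _ ⟨g, -, -, rfl⟩; exact hq g⟩ ⟨f, hf, hf₁, rfl⟩

lemma le_sphereInf {V : Submodule ℝ E} (hV : V ≠ ⊥) {b : ℝ}
    (h : ∀ f ∈ V, ‖f‖ = 1 → b ≤ q f) : b ≤ sphereInf q V := by
  obtain ⟨f, hf, hf₁⟩ := V.exists_mem_norm_eq_one hV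
  exact le_csInf ⟨q f, f, hf, hf₁, rfl⟩ (by rintro _ ⟨g, hg, hg₁, rfl⟩; exact h g hg hg₁)

lemma sphereInf_bot : sphereInf q ⊥ = 0 := by
  simp [sphereInf]

lemma bddAbove_sphereInf (hq : 0 ≤ q) (hM : ∀ f : E, ‖f‖ = 1 → q f ≤ M) (i : ℕ) :
    BddAbove {t : ℝ | ∃ V : Submodule ℝ E, FiniteDimensional ℝ V ∧ Module.finrank ℝ V = i ∧
      t = sphereInf q V} := by
  refine ⟨max M 0, ?_⟩
  rintro _ ⟨V, -, -, rfl⟩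
  obtain rfl | hV := eq_or_ne V ⊥
  · rw [sphereInf_bot]; exact le_max_right _ _
  · obtain ⟨f, hf, hf₁⟩ := V.exists_mem_norm_eq_one hV
    exact (sphereInf_le hq hf hf₁).trans ((hM f hf₁).trans (le_max_left _ _))

lemma le_courantFischer (hq : 0 ≤ q) (hM : ∀ f : E, ‖f‖ = 1 → q f ≤ M)
    {V : Submodule ℝ E} [FiniteDimensional ℝ V] :
    sphereInf q V ≤ courantFischer q (Module.finrank ℝ V) :=
  le_csSup (bddAbove_sphereInf hq hM _) ⟨V, inferInstance, rfl, rfl⟩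

lemma courantFischer_le {i : ℕ} {b : ℝ} (hb : 0 ≤ b)
    (h : ∀ V : Submodule ℝ E, FiniteDimensional ℝ V → Module.finrank ℝ V = i → sphereInf q V ≤ b) :
    courantFischer q i ≤ b :=
  Real.sSup_le (by rintro _ ⟨V, hV, rfl, rfl⟩; exact h V hV rfl) hb

lemma courantFischer_nonneg (hq : 0 ≤ q) (i : ℕ) : 0 ≤ courantFischer q i :=
  Real.sSup_nonneg <| by rintro _ ⟨V, -, -, rfl⟩; exact sphereInf_nonneg hq V

lemma courantFischer_mono (hq₁ : 0 ≤ q₁) (h : q₁ ≤ q₂) (hM : ∀ f : E, ‖f‖ = 1 → q₂ f ≤ M)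
    (i : ℕ) : courantFischer q₁ i ≤ courantFischer q₂ i := by
  have hq₂ : 0 ≤ q₂ := hq₁.trans h
  refine courantFischer_le (courantFischer_nonneg hq₂ i) fun V _ hV => ?_
  subst hV
  refine le_trans ?_ (le_courantFischer hq₂ hM)
  obtain rfl | hV := eq_or_ne V ⊥
  · simp [sphereInf_bot]
  · exact le_sphereInf hV fun f hf hf₁ => (sphereInf_le hq₁ hf hf₁).trans (h f)

lemma courantFischer_antitone (hq : 0 ≤ q) (hM : ∀ f : E, ‖f‖ = 1 → q f ≤ M) {i j : ℕ}
    (hj : 1 ≤ j) (hji : j ≤ i) : courantFischer q i ≤ courantFischer q j := by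
  refine courantFischer_le (courantFischer_nonneg hq j) fun V _ hV => ?_
  obtain ⟨U, hUV, _, rfl⟩ := V.exists_le_finrank_eq (hV ▸ hji)
  have hU : U ≠ ⊥ := by
    rintro rfl
    simp at hj
  calc sphereInf q V ≤ sphereInf q U :=
        le_sphereInf hU fun f hf hf₁ => sphereInf_le hq (hUV hf) hf₁
    _ ≤ _ := le_courantFischer hq hM

end CourantFischer

namespace LinearMap.IsSymmetric

variable {V : Type*} [NormedAddCommGroup V] [InnerProductSpace ℝ V] [FiniteDimensional ℝ V]
  {T : V →ₗ[ℝ] V} (hT : T.IsSymmetric) {n : ℕ} (hn : Module.finrank ℝ V = n)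

lemma inner_apply_self_eq_sum (v : V) :
    ⟪T v, v⟫ = ∑ i, hT.eigenvalues hn i * ⟪hT.eigenvectorBasis hn i, v⟫ ^ 2 := by
  rw [← (hT.eigenvectorBasis hn).sum_inner_mul_inner]
  refine Finset.sum_congr rfl fun i _ => ?_
  rw [hT, apply_eigenvectorBasis, real_inner_smul_right, real_inner_comm v,
    RCLike.ofReal_real_eq_id, id_eq]
  ring

lemma inner_apply_self_le (m : Fin n) {v : V}
    (hv : ∀ i < m, ⟪hT.eigenvectorBasis hn i, v⟫ = 0) :
    ⟪T v, v⟫ ≤ hT.eigenvalues hn m * ‖v‖ ^ 2 := by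
  rw [hT.inner_apply_self_eq_sum hn, ← (hT.eigenvectorBasis hn).sum_sq_inner_right, Finset.mul_sum]
  refine Finset.sum_le_sum fun i _ => ?_
  rcases lt_or_ge i m with hi | hi
  · simp [hv i hi]
  · exact mul_le_mul_of_nonneg_right (hT.eigenvalues_antitone hn hi) (sq_nonneg _)

lemma le_inner_apply_self (m : Fin n) {v : V}
    (hv : ∀ i, m < i → ⟪hT.eigenvectorBasis hn i, v⟫ = 0) :
    hT.eigenvalues hn m * ‖v‖ ^ 2 ≤ ⟪T v, v⟫ := by
  rw [hT.inner_apply_self_eq_sum hn, ← (hT.eigenvectorBasis hn).sum_sq_inner_right, Finset.mul_sum]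
  refine Finset.sum_le_sum fun i _ => ?_
  rcases lt_or_ge m i with hi | hi
  · simp [hv i hi]
  · exact mul_le_mul_of_nonneg_right (hT.eigenvalues_antitone hn hi) (sq_nonneg _)

end LinearMap.IsSymmetric

section Gram

variable {E F : Type*} [NormedAddCommGroup E] [InnerProductSpace ℝ E]
  [NormedAddCommGroup F] [InnerProductSpace ℝ F]

lemma ContinuousLinearMap.sq_norm_apply_le_of_norm_eq_one (A : E →L[ℝ] F) {f : E}
    (hf : ‖f‖ = 1) : ‖A f‖ ^ 2 ≤ ‖A‖ ^ 2 :=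
  pow_le_pow_left₀ (norm_nonneg _) (A.unit_le_opNorm f hf.le) 2

lemma eigenvalue_le_courantFischer {q : E → ℝ} {M : ℝ} (hq : 0 ≤ q)
    (hM : ∀ f : E, ‖f‖ = 1 → q f ≤ M) {V : Submodule ℝ E} [FiniteDimensional ℝ V]
    {T : V →ₗ[ℝ] V} (hT : T.IsSymmetric) (hTq : ∀ v : V, ⟪T v, v⟫ = q v) {n : ℕ}
    (hn : Module.finrank ℝ V = n) (m : Fin n) :
    hT.eigenvalues hn m ≤ courantFischer q (m + 1) := by
  set b := hT.eigenvectorBasis hn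
  let c : Fin (m + 1) → E := fun t => b (Fin.castLE m.isLt t)
  have hc : LinearIndependent ℝ c :=
    (b.orthonormal.linearIndependent.map' V.subtype V.ker_subtype).comp _
      (Fin.castLE_injective _)
  set U := Submodule.span ℝ (Set.range c)
  have : FiniteDimensional ℝ U := FiniteDimensional.span_of_finite ℝ (Set.finite_range c)
  have hU : Module.finrank ℝ U = m + 1 := by rw [finrank_span_eq_card hc, Fintype.card_fin]
  have hU_ne : U ≠ ⊥ := fun h => by rw [h, finrank_bot] at hU; omega
  have hUV : U ≤ V := Submodule.span_le.2 (Set.range_subset_iff.2 fun t => (b _).2)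
  have hU_orth : ∀ i, m < i → ∀ u ∈ U, ⟪(b i : E), u⟫ = 0 := by
    intro i hi u hu
    have hspan : U ≤ LinearMap.ker (innerₛₗ ℝ (b i : E)) := by
      refine Submodule.span_le.2 (Set.range_subset_iff.2 fun t => ?_)
      have ht : Fin.castLE m.isLt t < i := lt_of_le_of_lt (Nat.le_of_lt_succ t.isLt) hi
      exact b.orthonormal.2 ht.ne'
    exact hspan hu
  calc hT.eigenvalues hn m ≤ sphereInf q U := le_sphereInf hU_ne fun u hu hu₁ => by
        have := hT.le_inner_apply_self hn m (v := ⟨u, hUV hu⟩) fun i hi => hU_orth i hi u hu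
        rwa [hTq, Submodule.coe_norm, hu₁, one_pow, mul_one] at this
    _ ≤ courantFischer q (Module.finrank ℝ U) := le_courantFischer hq hM
    _ = courantFischer q (m + 1) := by rw [hU]

lemma exists_orthogonal_le_courantFischer (A : E →L[ℝ] F) {V : Submodule ℝ E}
    [FiniteDimensional ℝ V] {j : ℕ} (hj : 1 ≤ j) (hjV : j ≤ Module.finrank ℝ V) :
    ∃ c : Fin (j - 1) → E, ∀ v ∈ V, (∀ i, ⟪c i, v⟫ = 0) →
      ‖A v‖ ^ 2 ≤ courantFischer (fun f => ‖A f‖ ^ 2) j * ‖v‖ ^ 2 := by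
  obtain ⟨m, rfl⟩ : ∃ m, j = m + 1 := ⟨j - 1, by omega⟩
  -- `S† S` represents `‖A ·‖²` on `V`; restricting the codomain to the (finite-dimensional)
  -- range makes `LinearMap.adjoint` available.
  let S := (A.toLinearMap ∘ₗ V.subtype).rangeRestrict
  have hT := LinearMap.isSymmetric_adjoint_comp_self S
  have hTq : ∀ v : V, ⟪(S.adjoint ∘ₗ S) v, v⟫ = ‖A v‖ ^ 2 := fun v => by
    rw [LinearMap.comp_apply, LinearMap.adjoint_inner_left, Submodule.coe_inner,
      real_inner_self_eq_norm_sq]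
    rfl
  let m' : Fin (Module.finrank ℝ V) := ⟨m, hjV⟩
  refine ⟨fun i => hT.eigenvectorBasis rfl (Fin.castLE (by omega) i), fun v hv hc => ?_⟩
  calc ‖A v‖ ^ 2 = ⟪(S.adjoint ∘ₗ S) ⟨v, hv⟩, ⟨v, hv⟩⟫ := (hTq ⟨v, hv⟩).symm
    _ ≤ hT.eigenvalues rfl m' * ‖v‖ ^ 2 :=
        hT.inner_apply_self_le rfl m' fun i hi => hc ⟨i, hi⟩
    _ ≤ courantFischer (fun f => ‖A f‖ ^ 2) (m + 1) * ‖v‖ ^ 2 :=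
        mul_le_mul_of_nonneg_right (eigenvalue_le_courantFischer (fun f => sq_nonneg _)
          (fun _ => A.sq_norm_apply_le_of_norm_eq_one)
          hT hTq rfl m') (sq_nonneg _)

lemma courantFischer_add_le {G : Type*} [NormedAddCommGroup G] [InnerProductSpace ℝ G]
    (A₁ : E →L[ℝ] F) (A₂ : E →L[ℝ] G) {a b : ℕ} (ha : 1 ≤ a) (hb : 1 ≤ b) :
    courantFischer (fun f => ‖A₁ f‖ ^ 2 + ‖A₂ f‖ ^ 2) (a + b - 1) ≤
      courantFischer (fun f => ‖A₁ f‖ ^ 2) a + courantFischer (fun f => ‖A₂ f‖ ^ 2) b := by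
  refine courantFischer_le (add_nonneg (courantFischer_nonneg (fun f => sq_nonneg _) a)
    (courantFischer_nonneg (fun f => sq_nonneg _) b)) fun V _ hV => ?_
  obtain ⟨c₁, hc₁⟩ := exists_orthogonal_le_courantFischer A₁ ha (V := V) (by omega)
  obtain ⟨c₂, hc₂⟩ := exists_orthogonal_le_courantFischer A₂ hb (V := V) (by omega)
  obtain ⟨v, hv, hv₁, hvc⟩ :=
    V.exists_mem_norm_eq_one_forall_inner_eq_zero (Fin.append c₁ c₂) (by omega)
  calc sphereInf (fun f => ‖A₁ f‖ ^ 2 + ‖A₂ f‖ ^ 2) V ≤ ‖A₁ v‖ ^ 2 + ‖A₂ v‖ ^ 2 :=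
        sphereInf_le (fun f => add_nonneg (sq_nonneg _) (sq_nonneg _)) hv hv₁
    _ ≤ _ := by
        have h₁ := hc₁ v hv fun i => by simpa using hvc (Fin.castAdd _ i)
        have h₂ := hc₂ v hv fun i => by simpa using hvc (Fin.natAdd _ i)
        rw [hv₁, one_pow, mul_one] at h₁ h₂
        exact add_le_add h₁ h₂

end Gram

namespace IsPosDefKernel

variable {X : Type*} {k : X → X → ℝ}

lemma sum_finset_nonneg (hk : IsPosDefKernel k) (s : Finset X) (c : X → ℝ) :
    0 ≤ ∑ x ∈ s, ∑ y ∈ s, c x * c y * k x y := by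
  have h := hk.2 s.card (fun i => (s.equivFin.symm i : X)) (fun i => c (s.equivFin.symm i))
  rw [Fintype.sum_equiv s.equivFin.symm _ (fun x : s => ∑ y : s, c x * c y * k x y)
    (fun i => Fintype.sum_equiv s.equivFin.symm _ _ (fun j => rfl))] at h
  rw [← Finset.sum_coe_sort s]
  simp_rw [← Finset.sum_coe_sort s (fun y => c _ * c y * k _ y)]
  exact h

/-- `k` as an operator-valued matrix, the input format of `RKHS.OfKernel`. -/
def toMatrix (k : X → X → ℝ) : Matrix X X (ℝ →L[ℝ] ℝ) := .of fun x y => k x y • 1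

lemma posSemidef_toMatrix (hk : IsPosDefKernel k) : (toMatrix k).PosSemidef := by
  refine ((RKHS.posSemidef_tfae (𝕜 := ℝ) (K := toMatrix k)).out 0 2).mpr ?_
  refine ⟨?_, fun c => ?_⟩
  · ext x y : 1
    simp [toMatrix, hk.1 x y]
  · convert hk.sum_finset_nonneg c.support c using 1
    simp [toMatrix, Finsupp.sum, hk.1 _ _, mul_comm, mul_left_comm]

section RKHS

open RKHS

variable [Fact (toMatrix k).PosSemidef]

local notation "𝓗" => OfKernel (toMatrix k)

lemma kerFun_one_apply (x y : X) : kerFun 𝓗 x 1 y = k y x := by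
  rw [kerFun_apply, OfKernel.kernel_ofKernel]
  simp [toMatrix]

lemma apply_eq_inner (w : 𝓗) (x : X) : w x = ⟪w, kerFun 𝓗 x 1⟫ := by
  simp

lemma abs_apply_le (w : 𝓗) (x : X) : |w x| ≤ ‖w‖ * √|k x x| := by
  have h := norm_apply_le w x
  rw [OfKernel.kernel_ofKernel] at h
  simpa [toMatrix] using h

lemma measurable_coe [MeasurableSpace X] (hk : IsPosDefKernel k) (hmeas : ∀ x, Measurable (k x))
    (w : 𝓗) : Measurable w := by
  have hw : w ∈ closure (Submodule.span ℝ {kerFun 𝓗 x v | (x) (v)} : Set 𝓗) := by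
    rw [← Submodule.topologicalClosure_coe, kerFun_dense]
    trivial
  have hspan : ∀ u ∈ Submodule.span ℝ {kerFun 𝓗 x v | (x) (v)}, Measurable ⇑u := by
    intro u hu
    induction hu using Submodule.span_induction with
    | mem _ h =>
      obtain ⟨x, v, rfl⟩ := h
      have : ⇑(kerFun 𝓗 x v) = fun y => k x y * v := by
        ext y
        rw [kerFun_apply, OfKernel.kernel_ofKernel]
        simp [toMatrix, hk.1 y x]
      rw [this]
      exact (hmeas x).mul_const v
    | zero => rw [coe_zero]; exact measurable_zero
    | add _ _ _ _ h₁ h₂ => simpa using h₁.add h₂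
    | smul c _ _ h => simpa using h.const_smul c
  obtain ⟨u, hu, hlim⟩ := mem_closure_iff_seq_limit.1 hw
  exact measurable_of_tendsto_metrizable (fun n => hspan _ (hu n))
    (tendsto_pi_nhds.2 fun x => ((continuous_eval x).tendsto w).comp hlim)

end RKHS

end IsPosDefKernel

lemma kernelEig_eq_courantFischer {X : Type*} [MeasurableSpace X] (k : X → X → ℝ)
    (μ : Measure X) : kernelEig k μ = courantFischer fun f : Lp ℝ 2 μ => quadForm k μ f :=
  rfl

lemma quadForm_eq_integral_mul_integral {X : Type*} [MeasurableSpace X] (k : X → X → ℝ)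
    (μ : Measure X) (f : X → ℝ) :
    quadForm k μ f = ∫ x, f x * ∫ y, k x y * f y ∂μ ∂μ := by
  refine integral_congr_ae (ae_of_all _ fun x => ?_)
  dsimp only
  rw [← integral_const_mul]
  exact integral_congr_ae (ae_of_all _ fun y => by ring)

structure IsFiniteTraceKernel {X : Type*} [MeasurableSpace X] (k : X → X → ℝ) (μ : Measure X) :
    Prop where
  posDef : IsPosDefKernel k
  measurable : ∀ x, Measurable (k x)
  integrable_diag : Integrable (fun x => k x x) μ

namespace IsFiniteTraceKernel

open RKHS IsPosDefKernel

variable {X : Type*} [MeasurableSpace X] {μ : Measure X} {k : X → X → ℝ}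

lemma of_continuous [TopologicalSpace X] [OpensMeasurableSpace X] (hk : IsPosDefKernel k)
    (hcont : Continuous (Function.uncurry k)) (hint : Integrable (fun x => k x x) μ) :
    IsFiniteTraceKernel k μ :=
  ⟨hk, fun x => (hcont.comp (Continuous.prodMk_right x)).measurable, hint⟩

lemma memLp_sqrt_abs_diag (hk : IsFiniteTraceKernel k μ) : MemLp (fun x => √|k x x|) 2 μ := by
  refine (memLp_two_iff_integrable_sq ?_).2 ?_
  · exact Real.continuous_sqrt.comp_aestronglyMeasurable hk.integrable_diag.abs.1
  · simpa [Real.sq_sqrt (abs_nonneg _)] using hk.integrable_diag.abs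

lemma fact_posSemidef (hk : IsFiniteTraceKernel k μ) : Fact (toMatrix k).PosSemidef :=
  ⟨hk.posDef.posSemidef_toMatrix⟩

section RKHS

variable [Fact (toMatrix k).PosSemidef] (hk : IsFiniteTraceKernel k μ)

local notation "𝓗" => OfKernel (toMatrix k)

include hk in
lemma memLp_coe (w : 𝓗) : MemLp w 2 μ :=
  hk.memLp_sqrt_abs_diag.of_le_mul (c := ‖w‖)
    (measurable_coe hk.posDef hk.measurable w).aestronglyMeasurable
    (ae_of_all _ fun x => by
      rw [Real.norm_eq_abs, Real.norm_eq_abs, abs_of_nonneg (Real.sqrt_nonneg _)]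
      exact abs_apply_le w x)

def inclusion : 𝓗 →L[ℝ] Lp ℝ 2 μ :=
  LinearMap.mkContinuous
    { toFun w := (hk.memLp_coe w).toLp w
      map_add' w w' := by simp only [coe_add]; exact MemLp.toLp_add _ _
      map_smul' c w := by simp only [coe_smul]; exact MemLp.toLp_const_smul _ _ }
    ‖hk.memLp_sqrt_abs_diag.toLp _‖
    fun w => by
      rw [mul_comm]
      refine Lp.norm_le_mul_norm_of_ae_le_mul ?_
      filter_upwards [(hk.memLp_coe w).coeFn_toLp, hk.memLp_sqrt_abs_diag.coeFn_toLp] with x h₁ h₂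
      rw [LinearMap.coe_mk, AddHom.coe_mk, h₁, h₂, Real.norm_eq_abs, Real.norm_eq_abs,
        abs_of_nonneg (Real.sqrt_nonneg _)]
      exact abs_apply_le w x

lemma coeFn_inclusion (w : 𝓗) : hk.inclusion w =ᵐ[μ] w :=
  (hk.memLp_coe w).coeFn_toLp

lemma inner_inclusion (f : Lp ℝ 2 μ) (w : 𝓗) : ⟪f, hk.inclusion w⟫ = ∫ y, f y * w y ∂μ := by
  rw [L2.inner_def]
  refine integral_congr_ae ?_
  filter_upwards [hk.coeFn_inclusion w] with y hy
  rw [hy, real_inner_eq_re_inner, RCLike.inner_apply]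
  simp [mul_comm]

include hk in
lemma integrable_mul_coe (f : Lp ℝ 2 μ) (w : 𝓗) : Integrable (fun y => f y * w y) μ := by
  refine (L2.integrable_inner f (hk.inclusion w)).congr ?_
  filter_upwards [hk.coeFn_inclusion w] with y hy
  simp [hy, mul_comm]

lemma adjoint_inclusion_apply (f : Lp ℝ 2 μ) (x : X) :
    ((hk.inclusion†) f) x = ∫ y, k x y * f y ∂μ := by
  rw [apply_eq_inner, ContinuousLinearMap.adjoint_inner_left, inner_inclusion]
  refine integral_congr_ae (ae_of_all _ fun y => ?_)
  dsimp only
  rw [kerFun_one_apply, hk.posDef.1, mul_comm]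

lemma quadForm_eq_norm_sq (f : Lp ℝ 2 μ) : quadForm k μ f = ‖(hk.inclusion†) f‖ ^ 2 := by
  calc quadForm k μ f = ∫ x, f x * (hk.inclusion†) f x ∂μ := by
        simp_rw [quadForm_eq_integral_mul_integral, hk.adjoint_inclusion_apply]
    _ = ⟪f, hk.inclusion ((hk.inclusion†) f)⟫ := (hk.inner_inclusion _ _).symm
    _ = ‖(hk.inclusion†) f‖ ^ 2 := by
        rw [← ContinuousLinearMap.adjoint_inner_left, real_inner_self_eq_norm_sq]

end RKHS

lemma integrable_kernel_mul (hk : IsFiniteTraceKernel k μ) (f : Lp ℝ 2 μ) (x : X) :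
    Integrable (fun y => k x y * f y) μ := by
  have := hk.fact_posSemidef
  refine (hk.integrable_mul_coe f (kerFun (OfKernel (toMatrix k)) x 1)).congr
    (ae_of_all _ fun y => ?_)
  simp only [kerFun_one_apply, hk.posDef.1 y x, mul_comm]

lemma integrable_mul_integral_kernel_mul (hk : IsFiniteTraceKernel k μ) (f : Lp ℝ 2 μ) :
    Integrable (fun x => f x * ∫ y, k x y * f y ∂μ) μ := by
  have := hk.fact_posSemidef
  simpa only [hk.adjoint_inclusion_apply] using hk.integrable_mul_coe f ((hk.inclusion†) f)

variable {k₁ k₂ : X → X → ℝ}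

lemma quadForm_add (hk₁ : IsFiniteTraceKernel k₁ μ) (hk₂ : IsFiniteTraceKernel k₂ μ)
    (f : Lp ℝ 2 μ) :
    quadForm (fun x y => k₁ x y + k₂ x y) μ f = quadForm k₁ μ f + quadForm k₂ μ f := by
  simp only [quadForm_eq_integral_mul_integral]
  rw [← integral_add (hk₁.integrable_mul_integral_kernel_mul f)
    (hk₂.integrable_mul_integral_kernel_mul f)]
  refine integral_congr_ae (ae_of_all _ fun x => ?_)
  simp only [add_mul, integral_add (hk₁.integrable_kernel_mul f x) (hk₂.integrable_kernel_mul f x),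
    mul_add]

lemma kernelEig_antitone (hk : IsFiniteTraceKernel k μ) {i j : ℕ} (hj : 1 ≤ j) (hji : j ≤ i) :
    kernelEig k μ i ≤ kernelEig k μ j := by
  have := hk.fact_posSemidef
  simp_rw [kernelEig_eq_courantFischer, hk.quadForm_eq_norm_sq]
  exact courantFischer_antitone (fun _ => sq_nonneg _)
    (fun _ => ContinuousLinearMap.sq_norm_apply_le_of_norm_eq_one _) hj hji

lemma kernelEig_le_kernelEig_add (hk₁ : IsFiniteTraceKernel k₁ μ)
    (hk₂ : IsFiniteTraceKernel k₂ μ) (i : ℕ) :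
    kernelEig k₁ μ i ≤ kernelEig (fun x y => k₁ x y + k₂ x y) μ i := by
  have := hk₁.fact_posSemidef
  have := hk₂.fact_posSemidef
  simp_rw [kernelEig_eq_courantFischer, quadForm_add hk₁ hk₂, hk₁.quadForm_eq_norm_sq,
    hk₂.quadForm_eq_norm_sq]
  exact courantFischer_mono (fun _ => sq_nonneg _) (fun _ => le_add_of_nonneg_right (sq_nonneg _))
    (fun _ hf => add_le_add (ContinuousLinearMap.sq_norm_apply_le_of_norm_eq_one _ hf)
      (ContinuousLinearMap.sq_norm_apply_le_of_norm_eq_one _ hf)) i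

lemma kernelEig_add_le (hk₁ : IsFiniteTraceKernel k₁ μ) (hk₂ : IsFiniteTraceKernel k₂ μ)
    {a b : ℕ} (ha : 1 ≤ a) (hb : 1 ≤ b) :
    kernelEig (fun x y => k₁ x y + k₂ x y) μ (a + b - 1) ≤ kernelEig k₁ μ a + kernelEig k₂ μ b := by
  have := hk₁.fact_posSemidef
  have := hk₂.fact_posSemidef
  simp_rw [kernelEig_eq_courantFischer, quadForm_add hk₁ hk₂, hk₁.quadForm_eq_norm_sq,
    hk₂.quadForm_eq_norm_sq]
  exact courantFischer_add_le _ _ ha hb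

end IsFiniteTraceKernel

theorem kernelEig_add_asymp_general
    {X : Type*} [TopologicalSpace X] [MeasurableSpace X] [BorelSpace X]
    (μ : Measure X)
    (k₁ k₂ : X → X → ℝ)
    (hk₁_cont : Continuous (Function.uncurry k₁)) (hk₂_cont : Continuous (Function.uncurry k₂))
    (hk₁_pd : IsPosDefKernel k₁) (hk₂_pd : IsPosDefKernel k₂)
    (hk₁_int : Integrable (fun x => k₁ x x) μ) (hk₂_int : Integrable (fun x => k₂ x x) μ)
    (h_double : ∃ c > (0:ℝ), ∃ C > (0:ℝ), ∃ N : ℕ, ∀ i ≥ N,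
        c * kernelEig k₁ μ (2 * i) ≤ kernelEig k₁ μ i ∧
        kernelEig k₁ μ i ≤ C * kernelEig k₁ μ (2 * i))
    (h_dom : ∃ C > (0:ℝ), ∃ N : ℕ, ∀ i ≥ N, kernelEig k₂ μ i ≤ C * kernelEig k₁ μ i) :
    ∃ c > (0:ℝ), ∃ C > (0:ℝ), ∃ N : ℕ, ∀ i ≥ N,
      c * kernelEig k₁ μ i ≤ kernelEig (fun x y => k₁ x y + k₂ x y) μ i ∧
      kernelEig (fun x y => k₁ x y + k₂ x y) μ i ≤ C * kernelEig k₁ μ i := by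
  have hk₁ := IsFiniteTraceKernel.of_continuous (μ := μ) hk₁_pd hk₁_cont hk₁_int
  have hk₂ := IsFiniteTraceKernel.of_continuous (μ := μ) hk₂_pd hk₂_cont hk₂_int
  obtain ⟨_, _, C₀, hC₀, N₀, h_double⟩ := h_double
  obtain ⟨C₂, hC₂, N₂, h_dom⟩ := h_dom
  refine ⟨1, one_pos, (1 + C₂) * C₀, by positivity, 2 * (N₀ + N₂) + 1, fun i hi => ⟨?_, ?_⟩⟩
  · rw [one_mul]
    exact hk₁.kernelEig_le_kernelEig_add hk₂ i
  set a := (i + 1) / 2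
  set b := i + 1 - a
  calc kernelEig (fun x y => k₁ x y + k₂ x y) μ i
      = kernelEig (fun x y => k₁ x y + k₂ x y) μ (a + b - 1) := by congr 1; omega
    _ ≤ kernelEig k₁ μ a + kernelEig k₂ μ b := hk₁.kernelEig_add_le hk₂ (by omega) (by omega)
    _ ≤ kernelEig k₁ μ a + C₂ * kernelEig k₁ μ a := by
        gcongr
        exact (h_dom b (by omega)).trans
          (mul_le_mul_of_nonneg_left (hk₁.kernelEig_antitone (by omega) (by omega)) hC₂.le)
    _ = (1 + C₂) * kernelEig k₁ μ a := by ring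
    _ ≤ (1 + C₂) * (C₀ * kernelEig k₁ μ (2 * a)) := by
        gcongr
        exact (h_double a (by omega)).2
    _ ≤ (1 + C₂) * C₀ * kernelEig k₁ μ i := by
        rw [mul_assoc]
        gcongr
        exact hk₁.kernelEig_antitone (by omega) (by omega)

/-- If `λ_i(k₁) ≍ λ_{2i}(k₁)` and `λ_i(k₂) = O(λ_i(k₁))`, then
`λ_i(k₁ + k₂) ≍ λ_i(k₁)` as `i → ∞`. -/
theorem kernelEig_add_asymp
    {X : Type*} [TopologicalSpace X] [T2Space X] [MeasurableSpace X] [BorelSpace X]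
    (μ : Measure X)
    (k₁ k₂ : X → X → ℝ)
    (hk₁_cont : Continuous (Function.uncurry k₁)) (hk₂_cont : Continuous (Function.uncurry k₂))
    (hk₁_pd : IsPosDefKernel k₁) (hk₂_pd : IsPosDefKernel k₂)
    (hk₁_int : Integrable (fun x => k₁ x x) μ) (hk₂_int : Integrable (fun x => k₂ x x) μ)
    (h_double : ∃ c > (0:ℝ), ∃ C > (0:ℝ), ∃ N : ℕ, ∀ i ≥ N,
        c * kernelEig k₁ μ (2 * i) ≤ kernelEig k₁ μ i ∧
        kernelEig k₁ μ i ≤ C * kernelEig k₁ μ (2 * i))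
    (h_dom : ∃ C > (0:ℝ), ∃ N : ℕ, ∀ i ≥ N, kernelEig k₂ μ i ≤ C * kernelEig k₁ μ i) :
    ∃ c > (0:ℝ), ∃ C > (0:ℝ), ∃ N : ℕ, ∀ i ≥ N,
      c * kernelEig k₁ μ i ≤ kernelEig (fun x y => k₁ x y + k₂ x y) μ i ∧
      kernelEig (fun x y => k₁ x y + k₂ x y) μ i ≤ C * kernelEig k₁ μ i :=
  kernelEig_add_asymp_general μ k₁ k₂ hk₁_cont hk₂_cont hk₁_pd hk₂_pd hk₁_int hk₂_int h_double h_dom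
end
end

section
/- Let T be a positive compact self-adjoint operator on L²(𝒳, μ) (for instance the integral operator of a continuous positive definite kernel with finite trace), and let Ω₁ ⊆ Ω₂ ⊆ 𝒳 be measurable sets. Then for every ε > 0, N^+(ε, P_{Ω₁} T P_{Ω₁}) ≤ N^+(ε, P_{Ω₂} T P_{Ω₂}). -/
/-!
Since `P₁` is self-adjoint and `P₂ P₁ = P₁`, the quadratic forms satisfy
`⟪P₁ T P₁ x, x⟫ = ⟪P₂ T P₂ (P₁ x), P₁ x⟫`, and `‖P₁ x‖ ≤ ‖x‖`. Hence for `ε > 0` the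
contraction `P₁` maps every subspace on which the form of `P₁ T P₁` exceeds `ε‖·‖²` injectively
onto a subspace of the same dimension on which the form of `P₂ T P₂` exceeds `ε‖·‖²`.
Compactness of `T` keeps these dimensions bounded, so the suprema are honest maxima.
-/

open MeasureTheory Filter Topology RealInnerProductSpace

noncomputable section

/-- `N^+(ε, A)`: the number of eigenvalues of a compact self-adjoint operator `A` strictly
greater than `ε`, characterized (Courant–Fischer) as the maximal dimension of a subspace on
which the quadratic form of `A` exceeds `ε‖·‖²`. -/
def opNplus {H : Type*} [NormedAddCommGroup H] [InnerProductSpace ℝ H]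
    (A : H →L[ℝ] H) (ε : ℝ) : ℕ :=
  sSup {n : ℕ | ∃ V : Submodule ℝ H, FiniteDimensional ℝ V ∧ Module.finrank ℝ V = n ∧
        ∀ x ∈ V, x ≠ 0 → ε * ‖x‖ ^ 2 < ⟪A x, x⟫}

theorem Metric.packingNumber_ne_top_of_totallyBounded {X : Type*} [PseudoEMetricSpace X]
    {s : Set X} {ε : NNReal} (hε : ε ≠ 0) (hs : TotallyBounded s) : packingNumber ε s ≠ ⊤ := by
  obtain ⟨N, -, hN, hcover⟩ := exists_finite_isCover_of_totallyBounded (ε := ε / 2) (by simpa) hs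
  refine ne_top_of_le_ne_top hN.encard_lt_top.ne ?_
  calc packingNumber ε s = packingNumber (2 * (ε / 2)) s := by rw [mul_div_cancel₀ _ two_ne_zero]
    _ ≤ externalCoveringNumber (ε / 2) s := packingNumber_two_mul_le_externalCoveringNumber _ _
    _ ≤ N.encard := hcover.externalCoveringNumber_le_encard

theorem Orthonormal.one_le_norm_sub {ι H : Type*} [NormedAddCommGroup H] [InnerProductSpace ℝ H]
    {v : ι → H} (hv : Orthonormal ℝ v) {i j : ι} (hij : i ≠ j) : 1 ≤ ‖v i - v j‖ := by
  have hsq : ‖v i - v j‖ ^ 2 = 2 := by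
    rw [norm_sub_sq_real, hv.1 i, hv.1 j, hv.2 hij]; ring
  nlinarith [norm_nonneg (v i - v j)]

section opNplus

variable {H : Type*} [NormedAddCommGroup H] [InnerProductSpace ℝ H]

theorem lt_norm_apply_of_lt_inner {A : H →L[ℝ] H} {ε : ℝ} {x : H} (hx : x ≠ 0)
    (h : ε * ‖x‖ ^ 2 < ⟪A x, x⟫) : ε * ‖x‖ < ‖A x‖ := by
  have hpos : 0 < ‖x‖ := norm_pos_iff.2 hx
  have hcs : ε * ‖x‖ ^ 2 < ‖A x‖ * ‖x‖ := h.trans_le (real_inner_le_norm (A x) x)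
  nlinarith

theorem lt_dist_apply_of_lt_inner {A : H →L[ℝ] H} {ε : ℝ} (hε : 0 ≤ ε) {V : Submodule ℝ H}
    (hV : ∀ x ∈ V, x ≠ 0 → ε * ‖x‖ ^ 2 < ⟪A x, x⟫) {x y : H} (hx : x ∈ V) (hy : y ∈ V)
    (hxy : 1 ≤ ‖x - y‖) : ε < dist (A x) (A y) := by
  have hne : x - y ≠ 0 := norm_pos_iff.1 (one_pos.trans_le hxy)
  rw [dist_eq_norm, ← map_sub]
  calc ε ≤ ε * ‖x - y‖ := le_mul_of_one_le_right hε hxy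
    _ < ‖A (x - y)‖ := lt_norm_apply_of_lt_inner hne (hV _ (V.sub_mem hx hy) hne)

/-- The images of an orthonormal basis of a subspace counted by `opNplus A ε` are
`ε`-separated and lie in the relatively compact set `A '' closedBall 0 1`, so their number is
bounded by its `ε`-packing number. -/
theorem opNplus_bddAbove {A : H →L[ℝ] H} (hA : IsCompactOperator A) {ε : ℝ} (hε : 0 < ε) :
    BddAbove {n : ℕ | ∃ V : Submodule ℝ H, FiniteDimensional ℝ V ∧ Module.finrank ℝ V = n ∧
        ∀ x ∈ V, x ≠ 0 → ε * ‖x‖ ^ 2 < ⟪A x, x⟫} := by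
  set K := A '' Metric.closedBall 0 1
  have hK : Metric.packingNumber ε.toNNReal K ≠ ⊤ :=
    Metric.packingNumber_ne_top_of_totallyBounded (by simpa using hε)
      ((hA.isCompact_closure_image_closedBall 1).totallyBounded.subset subset_closure)
  refine ⟨(Metric.packingNumber ε.toNNReal K).toNat, ?_⟩
  rintro _ ⟨V, _, rfl, hV⟩
  let b : Fin (Module.finrank ℝ V) → H := fun i => (stdOrthonormalBasis ℝ V i : H)
  have hb : Orthonormal ℝ b :=
    (stdOrthonormalBasis ℝ V).orthonormal.comp_linearIsometry V.subtypeₗᵢ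
  have hsep : ∀ i j, i ≠ j → ε < dist (A (b i)) (A (b j)) := fun i j hij =>
    lt_dist_apply_of_lt_inner hε.le hV (Subtype.prop _) (Subtype.prop _) (hb.one_le_norm_sub hij)
  have hinj : Function.Injective (A ∘ b) := fun i j h => by
    by_contra hij
    exact dist_pos.1 (hε.trans (hsep i j hij)) h
  have hsub : Set.range (A ∘ b) ⊆ K := by
    rintro _ ⟨i, rfl⟩
    exact ⟨b i, by simp [hb.1 i], rfl⟩
  have hsep' : Metric.IsSeparated (ε.toNNReal : ENNReal) (Set.range (A ∘ b)) := by
    rintro _ ⟨i, rfl⟩ _ ⟨j, rfl⟩ hne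
    have hij : i ≠ j := fun h => hne (congrArg (A ∘ b) h)
    rw [edist_dist]
    exact (ENNReal.ofReal_lt_ofReal_iff (hε.trans (hsep i j hij))).2 (hsep i j hij)
  have hcard := hinj.encard_range.trans (hsep'.encard_le_packingNumber hsub)
  rw [ENat.card_eq_coe_fintype_card, Fintype.card_fin] at hcard
  lift Metric.packingNumber ε.toNNReal K to ℕ using hK with N
  exact_mod_cast hcard

variable {H' : Type*} [NormedAddCommGroup H'] [InnerProductSpace ℝ H']

theorem opNplus_le_of_inner_eq {A : H →L[ℝ] H} {B : H' →L[ℝ] H'} (hB : IsCompactOperator B)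
    (L : H →ₗ[ℝ] H') (hL : ∀ x, ‖L x‖ ≤ ‖x‖) (hAB : ∀ x, ⟪A x, x⟫ = ⟪B (L x), L x⟫)
    {ε : ℝ} (hε : 0 < ε) : opNplus A ε ≤ opNplus B ε := by
  refine csSup_le_csSup' (opNplus_bddAbove hB hε) ?_
  rintro _ ⟨V, _, rfl, hV⟩
  have hinj : Function.Injective (L.domRestrict V) := by
    rw [← LinearMap.ker_eq_bot, LinearMap.ker_eq_bot']
    intro x hx
    by_contra hx0
    have hpos := hV x x.2 (by simpa using hx0)
    have hLx : L x = 0 := hx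
    rw [hAB, hLx, map_zero, inner_zero_left] at hpos
    exact hpos.not_ge (by positivity)
  refine ⟨V.map L, inferInstance, ?_, ?_⟩
  · rw [← LinearMap.range_domRestrict, LinearMap.finrank_range_of_inj hinj]
  · rintro _ ⟨x, hxV, rfl⟩ hLx
    have hx0 : x ≠ 0 := by rintro rfl; simp at hLx
    calc ε * ‖L x‖ ^ 2 ≤ ε * ‖x‖ ^ 2 := by gcongr; exact hL x
      _ < ⟪A x, x⟫ := hV x hxV hx0
      _ = ⟪B (L x), L x⟫ := hAB x

end opNplus

def IsIndicatorMul {X : Type*} [MeasurableSpace X] (μ : Measure X) (Ω : Set X)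
    (P : Lp ℝ 2 μ →L[ℝ] Lp ℝ 2 μ) : Prop :=
  ∀ f : Lp ℝ 2 μ, (P f : X → ℝ) =ᵐ[μ] fun x => Set.indicator Ω (fun _ => (1:ℝ)) x * f x

namespace IsIndicatorMul

variable {X : Type*} [MeasurableSpace X] {μ : Measure X} {Ω : Set X}
  {P : Lp ℝ 2 μ →L[ℝ] Lp ℝ 2 μ}

theorem inner_map_left (hP : IsIndicatorMul μ Ω P) (f g : Lp ℝ 2 μ) : ⟪P f, g⟫ = ⟪f, P g⟫ := by
  rw [L2.inner_def, L2.inner_def]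
  refine integral_congr_ae ?_
  filter_upwards [hP f, hP g] with x hf hg
  simp only [RCLike.inner_apply, starRingEnd_apply, star_trivial, hf, hg]
  ring

theorem inner_comp_comp_apply (hP : IsIndicatorMul μ Ω P) (T : Lp ℝ 2 μ →L[ℝ] Lp ℝ 2 μ)
    (f : Lp ℝ 2 μ) : ⟪(P ∘L T ∘L P) f, f⟫ = ⟪T (P f), P f⟫ := by
  rw [ContinuousLinearMap.comp_apply, ContinuousLinearMap.comp_apply, hP.inner_map_left]

theorem norm_map_le (hP : IsIndicatorMul μ Ω P) (f : Lp ℝ 2 μ) : ‖P f‖ ≤ ‖f‖ := by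
  rw [Lp.norm_def, Lp.norm_def]
  refine ENNReal.toReal_mono (Lp.eLpNorm_ne_top f) (eLpNorm_mono_ae ?_)
  filter_upwards [hP f] with x hx
  by_cases hxΩ : x ∈ Ω <;> simp [hx, hxΩ]

theorem map_map_of_subset {Ω' : Set X} {P' : Lp ℝ 2 μ →L[ℝ] Lp ℝ 2 μ}
    (hP : IsIndicatorMul μ Ω P) (hP' : IsIndicatorMul μ Ω' P') (hΩ : Ω ⊆ Ω') (f : Lp ℝ 2 μ) :
    P' (P f) = P f := by
  refine Lp.ext ?_
  filter_upwards [hP' (P f), hP f] with x h' h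
  by_cases hxΩ : x ∈ Ω
  · simp [h', h, hxΩ, hΩ hxΩ]
  · simp [h', h, hxΩ]

end IsIndicatorMul

theorem opNplus_indicator_mono_general
    {X : Type*} [MeasurableSpace X]
    (μ : Measure X)
    (T : Lp ℝ 2 μ →L[ℝ] Lp ℝ 2 μ)
    (hT_cpt : IsCompactOperator T)
    (Ω₁ Ω₂ : Set X) (hsub : Ω₁ ⊆ Ω₂)
    (P₁ P₂ : Lp ℝ 2 μ →L[ℝ] Lp ℝ 2 μ)
    (hP₁ : ∀ f : Lp ℝ 2 μ,
        (P₁ f : X → ℝ) =ᵐ[μ] fun x => Set.indicator Ω₁ (fun _ => (1:ℝ)) x * f x)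
    (hP₂ : ∀ f : Lp ℝ 2 μ,
        (P₂ f : X → ℝ) =ᵐ[μ] fun x => Set.indicator Ω₂ (fun _ => (1:ℝ)) x * f x)
    (ε : ℝ) (hε : 0 < ε) :
    opNplus (P₁ ∘L T ∘L P₁) ε ≤ opNplus (P₂ ∘L T ∘L P₂) ε := by
  have hP₁ : IsIndicatorMul μ Ω₁ P₁ := hP₁
  have hP₂ : IsIndicatorMul μ Ω₂ P₂ := hP₂
  have hform : ∀ f, ⟪(P₁ ∘L T ∘L P₁) f, f⟫ = ⟪(P₂ ∘L T ∘L P₂) (P₁ f), P₁ f⟫ := fun f => by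
    rw [hP₁.inner_comp_comp_apply, hP₂.inner_comp_comp_apply, hP₁.map_map_of_subset hP₂ hsub]
  exact opNplus_le_of_inner_eq ((hT_cpt.comp_clm P₂).clm_comp P₂) P₁.toLinearMap
    hP₁.norm_map_le hform hε

/-- For a positive compact self-adjoint operator `T` on `L²(𝒳, μ)` and
measurable sets `Ω₁ ⊆ Ω₂`, with `P_j` the multiplication operators by the indicator functions
of `Ω_j`, one has `N^+(ε, P_{Ω₁} T P_{Ω₁}) ≤ N^+(ε, P_{Ω₂} T P_{Ω₂})` for every `ε > 0`. -/
theorem opNplus_indicator_mono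
    {X : Type*} [TopologicalSpace X] [T2Space X] [MeasurableSpace X] [BorelSpace X]
    (μ : Measure X)
    (T : Lp ℝ 2 μ →L[ℝ] Lp ℝ 2 μ)
    (hT_sa : ∀ f g : Lp ℝ 2 μ, ⟪T f, g⟫ = ⟪f, T g⟫)
    (hT_pos : ∀ f : Lp ℝ 2 μ, (0:ℝ) ≤ ⟪T f, f⟫)
    (hT_cpt : IsCompactOperator T)
    (Ω₁ Ω₂ : Set X) (hΩ₁ : MeasurableSet Ω₁) (hΩ₂ : MeasurableSet Ω₂) (hsub : Ω₁ ⊆ Ω₂)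
    (P₁ P₂ : Lp ℝ 2 μ →L[ℝ] Lp ℝ 2 μ)
    (hP₁ : ∀ f : Lp ℝ 2 μ,
        (P₁ f : X → ℝ) =ᵐ[μ] fun x => Set.indicator Ω₁ (fun _ => (1:ℝ)) x * f x)
    (hP₂ : ∀ f : Lp ℝ 2 μ,
        (P₂ f : X → ℝ) =ᵐ[μ] fun x => Set.indicator Ω₂ (fun _ => (1:ℝ)) x * f x)
    (ε : ℝ) (hε : 0 < ε) :
    opNplus (P₁ ∘L T ∘L P₁) ε ≤ opNplus (P₂ ∘L T ∘L P₂) ε :=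
  opNplus_indicator_mono_general μ T hT_cpt Ω₁ Ω₂ hsub P₁ P₂ hP₁ hP₂ ε hε
end
end

section
/- Let p ∈ ℕ and let (a_k)_{k≥0} be a real sequence with a_k → 0 as k → ∞ and Δ^{p+1} a_k ≥ 0 for all k ≥ 0. Then for every n ≥ 0, the series Σ_{k=0}^∞ A_k^p · Δ^{p+1} a_{n+k} converges and equals a_n. -/
/-!
Induction on `p`. The claim for `p`, applied to `Δa`, expresses each `Δa_m` as a series of
nonnegative terms `A_k^p Δ^{p+2} a_{m+k}`; in particular `Δa ≥ 0`, so `a_n = Σ_i Δa_{n+i}`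
telescopes. Summing the resulting nonnegative double array along the antidiagonals `i + k = j`
and using the hockey-stick identity `Σ_{k ≤ j} A_k^p = A_j^{p+1}` gives the claim for `p + 1`.
-/

open Filter Topology Finset

noncomputable section

/-- Forward difference operator on sequences: `(Δa)_k = a_k - a_{k+1}`. -/
def fdiff (a : ℕ → ℝ) : ℕ → ℝ := fun k => a k - a (k + 1)

theorem Filter.Tendsto.fdiff {a : ℕ → ℝ} (ha : Tendsto a atTop (𝓝 0)) :
    Tendsto (fdiff a) atTop (𝓝 0) := by
  have := ha.sub (ha.comp (tendsto_add_atTop_nat 1))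
  rwa [sub_zero] at this

theorem hasSum_fdiff {a : ℕ → ℝ} (ha : Tendsto a atTop (𝓝 0)) (hpos : ∀ k, 0 ≤ fdiff a k)
    (n : ℕ) : HasSum (fun k => fdiff a (n + k)) (a n) := by
  rw [hasSum_iff_tendsto_nat_of_nonneg (fun k => hpos (n + k))]
  have partial_sum (N : ℕ) : ∑ k ∈ range N, fdiff a (n + k) = a n - a (n + N) := by
    simpa only [fdiff, add_assoc, add_zero] using sum_range_sub' (fun k => a (n + k)) N
  simp only [partial_sum]
  have hshift : Tendsto (fun N => a (n + N)) atTop (𝓝 0) :=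
    ha.comp (tendsto_atTop_mono (fun N => Nat.le_add_left N n) tendsto_id)
  simpa using tendsto_const_nhds.sub hshift

theorem hasSum_prod_of_nonneg {α β : Type*} {f : α × β → ℝ} {g : α → ℝ} {s : ℝ} (hf : 0 ≤ f)
    (hrows : ∀ i, HasSum (fun j => f (i, j)) (g i)) (hg : HasSum g s) : HasSum f s := by
  have hsum : Summable f := (summable_prod_of_nonneg hf).2
    ⟨fun i => (hrows i).summable, by simpa only [fun i => (hrows i).tsum_eq] using hg.summable⟩
  simpa only [(hsum.hasSum.prod_fiberwise hrows).unique hg] using hsum.hasSum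

theorem HasSum.sum_antidiagonal {A α : Type*} [AddCommMonoid A] [HasAntidiagonal A]
    [AddCommMonoid α] [TopologicalSpace α] [ContinuousAdd α] [RegularSpace α]
    {f : A × A → α} {s : α} (hf : HasSum f s) :
    HasSum (fun n => ∑ q ∈ antidiagonal n, f q) s :=
  (HasAntidiagonal.sigmaAntidiagonalEquivProd.hasSum_iff.2 hf).sigma fun n => by
    rw [← sum_coe_sort]
    exact hasSum_fintype _

theorem hasSum_sum_range_mul_of_nonneg {c d r : ℕ → ℝ} {s : ℝ} (hc : ∀ k, 0 ≤ c k)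
    (hd : ∀ k, 0 ≤ d k) (hr : ∀ i, HasSum (fun k => c k * d (i + k)) (r i)) (hs : HasSum r s) :
    HasSum (fun j => (∑ k ∈ range (j + 1), c k) * d j) s := by
  have hf : HasSum (fun q : ℕ × ℕ => c q.2 * d (q.1 + q.2)) s :=
    hasSum_prod_of_nonneg (fun q => mul_nonneg (hc _) (hd _)) hr hs
  convert hf.sum_antidiagonal using 2 with j
  calc (∑ k ∈ range (j + 1), c k) * d j
      = ∑ q ∈ antidiagonal j, c q.2 * d j := by
        rw [← sum_mul, ← Nat.sum_antidiagonal_swap, Nat.sum_antidiagonal_eq_sum_range_succ_mk]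
        rfl
    _ = ∑ q ∈ antidiagonal j, c q.2 * d (q.1 + q.2) :=
        sum_congr rfl fun q hq => by rw [mem_antidiagonal.1 hq]

/-- **Tail-sum identity.** If `a_k → 0` and `Δ^{p+1} a_k ≥ 0` for all `k`, then
`Σ_{k≥0} A_k^p Δ^{p+1} a_{n+k} = a_n` for every `n`, where `A_k^p = C(k+p, k)`. -/
theorem tailSum_fdiff (p : ℕ) (a : ℕ → ℝ)
    (ha_lim : Tendsto a atTop (𝓝 0))
    (ha_pos : ∀ k, 0 ≤ fdiff^[p + 1] a k) (n : ℕ) :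
    HasSum (fun k : ℕ => (Nat.choose (k + p) k : ℝ) * fdiff^[p + 1] a (n + k)) (a n) := by
  induction p generalizing a n with
  | zero => simpa using hasSum_fdiff ha_lim ha_pos n
  | succ p ih =>
    rw [Function.iterate_succ_apply] at ha_pos ⊢
    have rows := ih (fdiff a) ha_lim.fdiff ha_pos
    have hfdiff_nonneg (m : ℕ) : 0 ≤ fdiff a m :=
      (rows m).nonneg fun k => mul_nonneg (Nat.cast_nonneg _) (ha_pos _)
    have := hasSum_sum_range_mul_of_nonneg (fun k => Nat.cast_nonneg _) (fun j => ha_pos (n + j))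
      (fun i => by simpa only [add_assoc] using rows (n + i)) (hasSum_fdiff ha_lim hfdiff_nonneg n)
    convert this using 2 with j
    rw [← Nat.cast_sum, sum_congr rfl fun k _ => Nat.choose_symm_add,
      Nat.sum_range_add_choose, Nat.choose_symm_add, add_assoc]
end
end

section
/- Let p ∈ ℕ, let (a_k)_{k≥0} be any real sequence, and let (b_k)_{k≥0} be a real sequence with b_k = 0 for all sufficiently large k. Then Σ_{k=0}^∞ a_k b_k = Σ_{k=0}^∞ Δ^{p+1} b_k · A_k^p · s_k^p, where s_k^p = (1/A_k^p) Σ_{j=0}^k A_{k−j}^p a_j is the p-Cesàro mean of (a_k); both sums have only finitely many nonzero terms. -/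
open Filter Topology

noncomputable section

private lemma fdiff_iter_zero (m : ℕ) : ∀ (b : ℕ → ℝ) (K : ℕ), (∀ k ≥ K, b k = 0) →
    ∀ k ≥ K, fdiff^[m] b k = 0 := by
  induction m with
  | zero => intro b K hb k hk; simpa using hb k hk
  | succ m ih =>
    intro b K hb k hk
    rw [Function.iterate_succ_apply]
    exact ih (fdiff b) K (fun j hj => by
      simp [fdiff, hb j hj, hb (j+1) (le_trans hj (Nat.le_succ j))]) k hk

private lemma abel_aux (a b : ℕ → ℝ) (n : ℕ) :
    ∑ k ∈ Finset.range n, a k * b k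
      = (∑ k ∈ Finset.range n, fdiff b k * ∑ j ∈ Finset.range (k+1), a j)
        + b n * ∑ j ∈ Finset.range n, a j := by
  induction n with
  | zero => simp
  | succ n ih =>
    rw [Finset.sum_range_succ (fun k => a k * b k), ih,
        Finset.sum_range_succ (fun k => fdiff b k * ∑ j ∈ Finset.range (k+1), a j),
        Finset.sum_range_succ a]
    simp only [fdiff]
    ring

private lemma cesaro_sum (a : ℕ → ℝ) (p k : ℕ) :
    ∑ j ∈ Finset.range (k+1), ∑ i ∈ Finset.range (j+1), ((j-i+p).choose (j-i) : ℝ) * a i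
      = ∑ i ∈ Finset.range (k+1), ((k-i+(p+1)).choose (k-i) : ℝ) * a i := by
  induction k with
  | zero => simp
  | succ k ih =>
    rw [Finset.sum_range_succ
      (fun j => ∑ i ∈ Finset.range (j+1), ((j-i+p).choose (j-i) : ℝ) * a i), ih,
      Finset.sum_range_succ (fun i => ((k+1-i+(p+1)).choose (k+1-i) : ℝ) * a i),
      Finset.sum_range_succ (fun i => ((k+1-i+p).choose (k+1-i) : ℝ) * a i)]
    have h : ∀ i ∈ Finset.range (k+1),
        ((k-i+(p+1)).choose (k-i) : ℝ) * a i + ((k+1-i+p).choose (k+1-i) : ℝ) * a i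
          = ((k+1-i+(p+1)).choose (k+1-i) : ℝ) * a i := by
      intro i hi
      have hik : i ≤ k := Nat.lt_succ_iff.mp (Finset.mem_range.mp hi)
      have e1 : k + 1 - i = k - i + 1 := by omega
      rw [e1]
      have e2 : k - i + 1 + (p+1) = (k - i + (p+1)) + 1 := by omega
      have e3 : k - i + 1 + p = k - i + (p+1) := by omega
      rw [e2, e3, Nat.choose_succ_succ]
      push_cast
      ring
    have hsum := Finset.sum_congr rfl h
    rw [Finset.sum_add_distrib] at hsum
    simp only [Nat.sub_self]
    rw [Nat.zero_add, Nat.choose_zero_right, Nat.zero_add, Nat.choose_zero_right]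
    linarith [hsum]

/-- **Summation by parts.** For any sequence `a` and an eventually-zero sequence
`b`, `Σ_k a_k b_k = Σ_k Δ^{p+1} b_k · Σ_{j≤k} A_{k-j}^p a_j` (i.e. `Σ_k Δ^{p+1}b_k A_k^p s_k^p`
with `s_k^p` the `p`-Cesàro mean of `a`); both sums have finitely many nonzero terms. -/
theorem summation_by_parts (p : ℕ) (a b : ℕ → ℝ) (K : ℕ) (hb : ∀ k ≥ K, b k = 0) :
    {k : ℕ | a k * b k ≠ 0}.Finite ∧
    {k : ℕ | fdiff^[p + 1] b k *
        ∑ j ∈ Finset.range (k + 1), (Nat.choose (k - j + p) (k - j) : ℝ) * a j ≠ 0}.Finite ∧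
    ∑' k : ℕ, a k * b k
      = ∑' k : ℕ, fdiff^[p + 1] b k *
          ∑ j ∈ Finset.range (k + 1), (Nat.choose (k - j + p) (k - j) : ℝ) * a j := by
  have hzero : ∀ m, ∀ k ≥ K, fdiff^[m] b k = 0 := fun m => fdiff_iter_zero m b K hb
  refine ⟨?_, ?_, ?_⟩
  · apply Set.Finite.subset (Finset.range K).finite_toSet
    intro k hk
    simp only [Set.mem_setOf_eq] at hk
    by_contra hk'
    exact hk (by rw [hb k (by simpa using hk')]; ring)
  · apply Set.Finite.subset (Finset.range K).finite_toSet
    intro k hk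
    simp only [Set.mem_setOf_eq] at hk
    by_contra hk'
    exact hk (by rw [hzero (p+1) k (by simpa using hk')]; ring)
  · rw [tsum_eq_sum (s := Finset.range K)
      (fun k hk => by rw [hb k (by simpa using hk)]; ring),
      tsum_eq_sum (s := Finset.range K)
      (fun k hk => by rw [hzero (p+1) k (by simpa using hk)]; ring)]
    induction p with
    | zero =>
      have := abel_aux a b K
      rw [hb K le_rfl] at this
      simpa using this
    | succ p ih =>
      rw [ih]
      have key := abel_aux
        (fun k => ∑ j ∈ Finset.range (k+1), ((k-j+p).choose (k-j) : ℝ) * a j)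
        (fdiff^[p+1] b) K
      rw [hzero (p+1) K le_rfl] at key
      simp only [zero_mul, add_zero] at key
      calc ∑ k ∈ Finset.range K, fdiff^[p + 1] b k *
              ∑ j ∈ Finset.range (k + 1), ((k - j + p).choose (k - j) : ℝ) * a j
          = ∑ k ∈ Finset.range K,
              (∑ j ∈ Finset.range (k + 1), ((k - j + p).choose (k - j) : ℝ) * a j)
                * fdiff^[p+1] b k := by
            exact Finset.sum_congr rfl (fun k _ => mul_comm _ _)
        _ = ∑ k ∈ Finset.range K, fdiff (fdiff^[p+1] b) k *
              ∑ j ∈ Finset.range (k+1),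
                ∑ i ∈ Finset.range (j+1), ((j-i+p).choose (j-i) : ℝ) * a i := key
        _ = ∑ k ∈ Finset.range K, fdiff^[p + 1 + 1] b k *
              ∑ j ∈ Finset.range (k + 1), ((k - j + (p+1)).choose (k - j) : ℝ) * a j := by
            refine Finset.sum_congr rfl (fun k _ => ?_)
            rw [cesaro_sum a p k, ← Function.iterate_succ_apply' fdiff (p+1) b]

end
end

section
/- Let p ∈ ℕ, a ∈ ℝ, and let f be p-times continuously differentiable on [a, a+p]. Then Δ^p f(a) = (−1)^p ∫_{[0,1]^p} f^{(p)}(a + t₁ + ⋯ + t_p) dt₁ ⋯ dt_p, where Δf(x) = f(x) − f(x+1) and Δ^{p+1} f(x) = Δ^p f(x) − Δ^p f(x+1). -/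
/-! Induction on `p`, with all derivatives taken within one fixed set. Fubini peels the first
coordinate `s` off the cube `[0,1]^(p+1)`, and the fundamental theorem of calculus turns the
integral of `f^{(p+1)}(a + s + t₂ + ⋯ + t_{p+1})` over `s ∈ [0,1]` into the difference of
`f^{(p)}` at `a + 1 + t₂ + ⋯` and at `a + t₂ + ⋯`. By induction the two resulting cube integrals
are `(-1)^p Δ^p f(a+1)` and `(-1)^p Δ^p f(a)`, whose difference is `(-1)^(p+1) Δ^(p+1) f(a)`. -/
open MeasureTheory

noncomputable section

/-- Forward difference operator on functions: `(Δf)(x) = f(x) - f(x+1)`. -/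
def fdiffFun (f : ℝ → ℝ) : ℝ → ℝ := fun x => f x - f (x + 1)

open Set Topology

theorem fdiffFun_iterate_succ_apply (n : ℕ) (f : ℝ → ℝ) (x : ℝ) :
    fdiffFun^[n + 1] f x = fdiffFun^[n] f x - fdiffFun^[n] f (x + 1) :=
  Function.iterate_succ_apply' fdiffFun n f ▸ rfl

def unitCube (n : ℕ) : Set (Fin n → ℝ) := univ.pi fun _ => Icc 0 1

theorem unitCube_eq_Icc (n : ℕ) : unitCube n = Icc 0 1 := pi_univ_Icc 0 1

theorem measurableSet_unitCube (n : ℕ) : MeasurableSet (unitCube n) :=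
  MeasurableSet.univ_pi fun _ => measurableSet_Icc

theorem add_sum_mem_Icc_of_mem_unitCube {n : ℕ} (x : ℝ) {t : Fin n → ℝ} (ht : t ∈ unitCube n) :
    x + ∑ i, t i ∈ Icc x (x + n) := by
  have h0 : 0 ≤ ∑ i, t i := Finset.sum_nonneg fun i _ => (ht i (mem_univ i)).1
  have h1 : ∑ i, t i ≤ n := by
    simpa using Finset.sum_le_sum fun i (_ : i ∈ Finset.univ) => (ht i (mem_univ i)).2
  constructor <;> linarith

section UnitCube

variable {E : Type*} [NormedAddCommGroup E]

theorem integrableOn_unitCube_comp_add_sum {n : ℕ} {x : ℝ} {g : ℝ → E}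
    (hg : ContinuousOn g (Icc x (x + n))) :
    IntegrableOn (fun t => g (x + ∑ i, t i)) (unitCube n) := by
  refine ContinuousOn.integrableOn_compact (isCompact_univ_pi fun _ => isCompact_Icc) ?_
  exact hg.comp (by fun_prop) fun t ht => add_sum_mem_Icc_of_mem_unitCube x ht

variable [NormedSpace ℝ E]

theorem setIntegral_unitCube_zero [CompleteSpace E] (F : (Fin 0 → ℝ) → E) :
    ∫ t in unitCube 0, F t = F 0 := by
  rw [show unitCube 0 = univ from eq_univ_of_forall fun _ i => i.elim0, setIntegral_univ,
    integral_unique]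
  simpa [volume_pi, measureReal_def] using congrArg F (Subsingleton.elim _ _)

theorem setIntegral_unitCube_succ {n : ℕ} {F : (Fin (n + 1) → ℝ) → E}
    (hF : IntegrableOn F (unitCube (n + 1))) :
    ∫ t in unitCube (n + 1), F t = ∫ u in unitCube n, ∫ s in Icc (0 : ℝ) 1, F (Fin.cons s u) := by
  set e : ℝ × (Fin n → ℝ) ≃ᵐ (Fin (n + 1) → ℝ) :=
    (MeasurableEquiv.piFinSuccAbove (fun _ => ℝ) 0).symm
  have he : MeasurePreserving e :=
    (volume_preserving_piFinSuccAbove (fun _ : Fin (n + 1) => ℝ) 0).symm _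
  have hpre : e ⁻¹' unitCube (n + 1) = Icc (0 : ℝ) 1 ×ˢ unitCube n := by
    rw [unitCube_eq_Icc, unitCube_eq_Icc]
    exact ((Fin.insertNthOrderIso (fun _ => ℝ) 0).preimage_Icc _ _).trans (Icc_prod_eq _ _)
  have hcomp : ∀ q, e q = Fin.cons q.1 q.2 := fun q => by
    simp [e, MeasurableEquiv.piFinSuccAbove_symm_apply, Fin.insertNthEquiv]
  rw [← he.integrableOn_comp_preimage e.measurableEmbedding, hpre] at hF
  simp only [Function.comp_def, hcomp] at hF
  rw [← he.setIntegral_preimage_emb e.measurableEmbedding, hpre]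
  simp only [hcomp]
  rw [Measure.volume_eq_prod] at hF ⊢
  rw [setIntegral_prod _ hF]
  refine integral_integral_swap ?_
  rwa [Measure.prod_restrict, ← IntegrableOn]

theorem setIntegral_unitCube_succ_of_hasDerivAt [CompleteSpace E] {n : ℕ} {x : ℝ} {g g' : ℝ → E}
    (hg : ContinuousOn g (Icc x (x + (n + 1 : ℕ))))
    (hg' : ContinuousOn g' (Icc x (x + (n + 1 : ℕ))))
    (hderiv : ∀ y ∈ Ioo x (x + (n + 1 : ℕ)), HasDerivAt g (g' y) y) :
    ∫ t in unitCube (n + 1), g' (x + ∑ i, t i)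
      = (∫ u in unitCube n, g (x + 1 + ∑ i, u i)) - ∫ u in unitCube n, g (x + ∑ i, u i) := by
  push_cast at hg hg' hderiv
  have hfiber : ∀ u ∈ unitCube n, ∫ s in Icc (0 : ℝ) 1, g' (x + ∑ i, Fin.cons s u i)
      = g (x + 1 + ∑ i, u i) - g (x + ∑ i, u i) := by
    intro u hu
    have hy := add_sum_mem_Icc_of_mem_unitCube x hu
    have hsub : Icc (x + ∑ i, u i) (x + 1 + ∑ i, u i) ⊆ Icc x (x + (n + 1)) :=
      Icc_subset_Icc hy.1 (by linarith [hy.2])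
    simp only [Fin.sum_cons, add_left_comm x]
    rw [integral_Icc_eq_integral_Ioc, ← intervalIntegral.integral_of_le zero_le_one,
      intervalIntegral.integral_comp_add_right, zero_add, add_comm 1, add_right_comm x]
    refine intervalIntegral.integral_eq_sub_of_hasDerivAt_of_le (by linarith) (hg.mono hsub)
      (fun z hz => hderiv z ⟨by linarith [hy.1, hz.1], by linarith [hy.2, hz.2]⟩) ?_
    exact (hg'.mono hsub).intervalIntegrable_of_Icc (by linarith)
  have hshift : ContinuousOn g (Icc (x + 1) (x + 1 + n)) :=
    hg.mono (Icc_subset_Icc (by linarith) (by linarith))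
  rw [setIntegral_unitCube_succ (integrableOn_unitCube_comp_add_sum (by exact_mod_cast hg')),
    setIntegral_congr_fun (measurableSet_unitCube n) hfiber,
    integral_sub (integrableOn_unitCube_comp_add_sum hshift)
      (integrableOn_unitCube_comp_add_sum (hg.mono (Icc_subset_Icc le_rfl (by linarith))))]

end UnitCube

theorem hasDerivAt_iteratedDerivWithin {𝕜 F : Type*} [NontriviallyNormedField 𝕜]
    [NormedAddCommGroup F] [NormedSpace 𝕜 F] {n : ℕ} {f : 𝕜 → F} {s : Set 𝕜} {y : 𝕜}
    (hs : UniqueDiffOn 𝕜 s) (hf : ContDiffOn 𝕜 (n + 1 : ℕ) f s) (hy : s ∈ 𝓝 y) :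
    HasDerivAt (iteratedDerivWithin n f s) (iteratedDerivWithin (n + 1) f s y) y := by
  rw [iteratedDerivWithin_succ]
  have hdiff := hf.differentiableOn_iteratedDerivWithin (by exact_mod_cast n.lt_succ_self) hs
  exact (hdiff y (mem_of_mem_nhds hy)).hasDerivWithinAt.hasDerivAt hy

theorem fdiffFun_iterate_eq_integral {n : ℕ} {f : ℝ → ℝ} {s : Set ℝ} (hs : UniqueDiffOn ℝ s)
    (hf : ContDiffOn ℝ n f s) {x : ℝ} (hx : Icc x (x + n) ⊆ s) :
    fdiffFun^[n] f x
      = (-1) ^ n * ∫ t in unitCube n, iteratedDerivWithin n f s (x + ∑ i, t i) := by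
  induction n generalizing x with
  | zero => rw [setIntegral_unitCube_zero]; simp
  | succ n ih =>
    have hfn : ContDiffOn ℝ n f s := hf.of_le (by exact_mod_cast n.le_succ)
    have hcont : ∀ m ≤ n + 1, ContinuousOn (iteratedDerivWithin m f s) (Icc x (x + (n + 1 : ℕ))) :=
      fun m hm => (hf.continuousOn_iteratedDerivWithin (by exact_mod_cast hm) hs).mono hx
    have hderiv : ∀ y ∈ Ioo x (x + (n + 1 : ℕ)),
        HasDerivAt (iteratedDerivWithin n f s) (iteratedDerivWithin (n + 1) f s y) y :=
      fun y hy => hasDerivAt_iteratedDerivWithin hs hf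
        (Filter.mem_of_superset (Icc_mem_nhds hy.1 hy.2) hx)
    push_cast at hx
    rw [fdiffFun_iterate_succ_apply, ih hfn ((Icc_subset_Icc le_rfl (by linarith)).trans hx),
      ih hfn ((Icc_subset_Icc (by linarith) (by linarith)).trans hx),
      setIntegral_unitCube_succ_of_hasDerivAt (hcont n n.le_succ) (hcont _ le_rfl) hderiv]
    ring

/-- If `f` is `p`-times continuously differentiable on `[a, a+p]`, then
`Δ^p f(a) = (-1)^p ∫_{[0,1]^p} f^{(p)}(a + t₁ + ⋯ + t_p) dt₁ ⋯ dt_p`. -/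
theorem fdiff_eq_integral_iteratedDeriv (p : ℕ) (a : ℝ) (f : ℝ → ℝ)
    (hf : ContDiffOn ℝ p f (Set.Icc a (a + p))) :
    fdiffFun^[p] f a
      = (-1 : ℝ) ^ p *
        ∫ t in Set.univ.pi fun _ : Fin p => Set.Icc (0:ℝ) 1,
          iteratedDerivWithin p f (Set.Icc a (a + p)) (a + ∑ i, t i) := by
  rcases p.eq_zero_or_pos with rfl | hp
  · change _ = _ * ∫ t in unitCube 0, _
    rw [setIntegral_unitCube_zero]
    simp
  · exact fdiffFun_iterate_eq_integral (uniqueDiffOn_Icc (by simpa)) hf subset_rfl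

end
end

section
/- Let c₀ > 0, β > 0 and p ∈ ℕ with p ≥ 1, and set μ_k = c₀ (k+1)^{−β} for k ≥ 0. Then for every k ≥ 0, 0 < Δ^p μ_k ≤ c₀ (β)_p (k+1)^{−(β+p)}, where (β)_p = β(β+1)⋯(β+p−1) is the rising factorial. -/
/-!
Extend `Δ` to real functions by `Δf(x) = f x - f (x + 1)`. It commutes with
differentiation, so if `f' = -g` then `(Δᵖf)' = -Δᵖg`, and the mean value theorem gives
`Δᵖ⁺¹f(x) = Δᵖg(ξ)` for some `ξ ∈ (x, x + 1)`. For `f = c y^{-β}` one has `g = cβ y^{-(β+1)}`,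
so positivity and the bound `c (β)ₚ x^{-(β+p)}` pass from `(cβ, β + 1, p)` to `(c, β, p + 1)`;
the bound survives because `ξ ≥ x` and the exponent is negative.
-/

noncomputable section

open Set

def fdiffReal (f : ℝ → ℝ) : ℝ → ℝ := fun x => f x - f (x + 1)

theorem fdiff_iterate_comp_add_natCast (f : ℝ → ℝ) (x : ℝ) (p : ℕ) :
    fdiff^[p] (fun k : ℕ => f (k + x)) = fun k : ℕ => fdiffReal^[p] f (k + x) := by
  induction p with
  | zero => rfl
  | succ p ih =>
    funext k
    simp only [Function.iterate_succ_apply', ih, fdiff, fdiffReal]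
    push_cast
    ring_nf

section Derivative

variable {f g : ℝ → ℝ} {a : ℝ}

theorem hasDerivAt_fdiffReal_iterate (hf : ∀ y, a < y → HasDerivAt f (-g y) y) (p : ℕ) :
    ∀ y, a < y → HasDerivAt (fdiffReal^[p] f) (-fdiffReal^[p] g y) y := by
  induction p with
  | zero => exact hf
  | succ p ih =>
    intro y hy
    simp only [Function.iterate_succ_apply']
    have hshift := (ih (y + 1) (by linarith)).comp_add_const y 1
    exact ((ih y hy).sub hshift).congr_deriv (by simp only [fdiffReal]; ring)

theorem exists_fdiffReal_eq (hf : ∀ y, a < y → HasDerivAt f (-g y) y) {x : ℝ} (hx : a < x) :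
    ∃ ξ ∈ Ioo x (x + 1), fdiffReal f x = g ξ := by
  have hcont : ContinuousOn f (Icc x (x + 1)) := fun y hy =>
    (hf y (hx.trans_le hy.1)).continuousAt.continuousWithinAt
  obtain ⟨ξ, hξ, hslope⟩ := exists_hasDerivAt_eq_slope f (fun y => -g y) (lt_add_one x) hcont
    fun y hy => hf y (hx.trans hy.1)
  refine ⟨ξ, hξ, ?_⟩
  rw [fdiffReal, ← neg_neg (g ξ), hslope]
  ring

end Derivative

section PowerFunction

theorem hasDerivAt_const_mul_rpow_neg (c β : ℝ) {y : ℝ} (hy : 0 < y) :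
    HasDerivAt (fun y => c * y ^ (-β)) (-(c * β * y ^ (-(β + 1)))) y := by
  have h := (Real.hasDerivAt_rpow_const (p := -β) (Or.inl hy.ne')).const_mul c
  rw [show -β - 1 = -(β + 1) by ring] at h
  exact h.congr_deriv (by ring)

theorem exists_fdiffReal_iterate_succ_const_mul_rpow_neg (c β : ℝ) (p : ℕ) {x : ℝ}
    (hx : 0 < x) : ∃ ξ ∈ Ioo x (x + 1),
      fdiffReal^[p + 1] (fun y => c * y ^ (-β)) x =
        fdiffReal^[p] (fun y => c * β * y ^ (-(β + 1))) ξ := by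
  rw [Function.iterate_succ_apply']
  exact exists_fdiffReal_eq
    (hasDerivAt_fdiffReal_iterate (fun y hy => hasDerivAt_const_mul_rpow_neg c β hy) p) hx

theorem fdiffReal_iterate_const_mul_rpow_neg_pos (p : ℕ) :
    ∀ {c β x : ℝ}, 0 < c → 0 < β → 0 < x → 0 < fdiffReal^[p] (fun y => c * y ^ (-β)) x := by
  induction p with
  | zero => intro c β x hc _ hx; exact mul_pos hc (Real.rpow_pos_of_pos hx _)
  | succ p ih =>
    intro c β x hc hβ hx
    obtain ⟨ξ, hξ, heq⟩ := exists_fdiffReal_iterate_succ_const_mul_rpow_neg c β p hx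
    rw [heq]
    exact ih (mul_pos hc hβ) (by linarith) (hx.trans hξ.1)

theorem fdiffReal_iterate_const_mul_rpow_neg_le (p : ℕ) :
    ∀ {c β x : ℝ}, 0 ≤ c → 0 ≤ β → 0 < x →
      fdiffReal^[p] (fun y => c * y ^ (-β)) x ≤
        c * (∏ i ∈ Finset.range p, (β + i)) * x ^ (-(β + p)) := by
  induction p with
  | zero => intro c β x _ _ _; simp
  | succ p ih =>
    intro c β x hc hβ hx
    obtain ⟨ξ, hξ, heq⟩ := exists_fdiffReal_iterate_succ_const_mul_rpow_neg c β p hx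
    have hprod : β * ∏ i ∈ Finset.range p, (β + 1 + i) = ∏ i ∈ Finset.range (p + 1), (β + i) := by
      rw [Finset.prod_range_succ']
      push_cast
      ring_nf
    have hcoeff : 0 ≤ c * β * ∏ i ∈ Finset.range p, (β + 1 + i) :=
      mul_nonneg (mul_nonneg hc hβ) (Finset.prod_nonneg fun i _ => by positivity)
    calc fdiffReal^[p + 1] (fun y => c * y ^ (-β)) x
        = fdiffReal^[p] (fun y => c * β * y ^ (-(β + 1))) ξ := heq
      _ ≤ c * β * (∏ i ∈ Finset.range p, (β + 1 + i)) * ξ ^ (-(β + 1 + p)) :=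
        ih (mul_nonneg hc hβ) (by linarith) (hx.trans hξ.1)
      _ ≤ c * β * (∏ i ∈ Finset.range p, (β + 1 + i)) * x ^ (-(β + 1 + p)) :=
        mul_le_mul_of_nonneg_left
          (Real.rpow_le_rpow_of_nonpos hx hξ.1.le (by linarith [p.cast_nonneg (α := ℝ)])) hcoeff
      _ = c * (∏ i ∈ Finset.range (p + 1), (β + i)) * x ^ (-(β + ↑(p + 1))) := by
        rw [← hprod]
        push_cast
        ring_nf

end PowerFunction

theorem fdiff_pow_bounds_general (c₀ β : ℝ) (hc₀ : 0 < c₀) (hβ : 0 < β) (p : ℕ)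
    (μ : ℕ → ℝ) (hμ : ∀ k, μ k = c₀ * ((k : ℝ) + 1) ^ (-β)) (k : ℕ) :
    0 < fdiff^[p] μ k ∧
    fdiff^[p] μ k ≤ c₀ * (∏ i ∈ Finset.range p, (β + i)) * ((k : ℝ) + 1) ^ (-(β + p)) := by
  have hμ' : μ = fun k : ℕ => (fun y => c₀ * y ^ (-β)) (k + 1) := funext hμ
  have hk : (0 : ℝ) < k + 1 := by positivity
  rw [hμ', fdiff_iterate_comp_add_natCast (fun y => c₀ * y ^ (-β)) 1]
  exact ⟨fdiffReal_iterate_const_mul_rpow_neg_pos p hc₀ hβ hk,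
    fdiffReal_iterate_const_mul_rpow_neg_le p hc₀.le hβ.le hk⟩

/-- For `μ_k = c₀ (k+1)^{-β}` one has
`0 < Δ^p μ_k ≤ c₀ (β)_p (k+1)^{-(β+p)}` for every `k`, where `(β)_p` is the rising factorial. -/
theorem fdiff_pow_bounds (c₀ β : ℝ) (hc₀ : 0 < c₀) (hβ : 0 < β) (p : ℕ) (hp : 1 ≤ p)
    (μ : ℕ → ℝ) (hμ : ∀ k, μ k = c₀ * ((k : ℝ) + 1) ^ (-β)) (k : ℕ) :
    0 < fdiff^[p] μ k ∧
    fdiff^[p] μ k ≤ c₀ * (∏ i ∈ Finset.range p, (β + i)) * ((k : ℝ) + 1) ^ (-(β + p)) :=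
  fdiff_pow_bounds_general c₀ β hc₀ hβ p μ hμ k

end
end

section
/- Let d ≥ 1 and let (μ_n)_{n≥0} be a real sequence with Δ^{d+1} μ_n ≥ 0 for all n and Δ^l μ_n → 0 as n → ∞ for each 1 ≤ l ≤ d. Suppose (B_n)_{n≥0} is a nonincreasing sequence such that C(n+d, d) · Δ^d μ_n ≤ B_n for all n ≥ 0. Then for every l with 1 ≤ l ≤ d and every n ≥ 0, C(n+l, l) · Δ^l μ_n ≤ (d/l) · B_n. -/
open Filter Topology
section Aux
open Finset


lemma choose_inv_id (l k : ℕ) (hl : 1 ≤ l) :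
    (1:ℝ)/(Nat.choose (k+l+1) (l+1)) =
      ((l+1:ℝ)/l) * (1/(Nat.choose (k+l) l) - 1/(Nat.choose (k+l+1) l)) := by
  obtain ⟨l', rfl⟩ : ∃ l', l = l' + 1 := ⟨l - 1, by omega⟩
  have hA : 0 < Nat.choose (k+(l'+1)) (l'+1) := Nat.choose_pos (by omega)
  have hB : 0 < Nat.choose (k+(l'+1)+1) (l'+1) := Nat.choose_pos (by omega)
  have hC : 0 < Nat.choose (k+(l'+1)+1) (l'+1+1) := Nat.choose_pos (by omega)
  have pascal : Nat.choose (k+(l'+1)+1) (l'+1)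
      = Nat.choose (k+(l'+1)) l' + Nat.choose (k+(l'+1)) (l'+1) :=
    Nat.choose_succ_succ _ _
  have h1 : Nat.choose (k+(l'+1)+1) (l'+1+1) * (l'+1+1)
      = Nat.choose (k+(l'+1)+1) (l'+1) * (k+1) := by
    have := Nat.choose_succ_right_eq (k+(l'+1)+1) (l'+1)
    simpa [show k+(l'+1)+1 - (l'+1) = k+1 by omega] using this
  have h2 : Nat.choose (k+(l'+1)) (l'+1) * (l'+1)
      = Nat.choose (k+(l'+1)) l' * (k+1) := by
    have := Nat.choose_succ_right_eq (k+(l'+1)) l'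
    simpa [show k+(l'+1) - l' = k+1 by omega] using this
  have hA' : (0:ℝ) < Nat.choose (k+(l'+1)) (l'+1) := by exact_mod_cast hA
  have hB' : (0:ℝ) < Nat.choose (k+(l'+1)+1) (l'+1) := by exact_mod_cast hB
  have hC' : (0:ℝ) < Nat.choose (k+(l'+1)+1) (l'+1+1) := by exact_mod_cast hC
  have p' : (Nat.choose (k+(l'+1)+1) (l'+1) : ℝ)
      = Nat.choose (k+(l'+1)) l' + Nat.choose (k+(l'+1)) (l'+1) := by exact_mod_cast pascal
  have h1' : (Nat.choose (k+(l'+1)+1) (l'+1+1) : ℝ) * (l'+1+1)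
      = Nat.choose (k+(l'+1)+1) (l'+1) * (k+1) := by exact_mod_cast h1
  have h2' : (Nat.choose (k+(l'+1)) (l'+1) : ℝ) * (l'+1)
      = Nat.choose (k+(l'+1)) l' * (k+1) := by exact_mod_cast h2
  set A := (Nat.choose (k+(l'+1)) (l'+1) : ℝ)
  set Bc := (Nat.choose (k+(l'+1)+1) (l'+1) : ℝ)
  set Cc := (Nat.choose (k+(l'+1)+1) (l'+1+1) : ℝ)
  set D := (Nat.choose (k+(l'+1)) l' : ℝ)
  have hl1 : (0:ℝ) < (l':ℝ) + 1 := by positivity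
  push_cast
  field_simp
  linear_combination Bc*h2' - (Bc-A)*h1' - Bc*((k:ℝ)+1)*p'


-- telescoping of fdiff over Ico
lemma fdiff_telescope (a : ℕ → ℝ) (n N : ℕ) (h : n ≤ N) :
    ∑ k ∈ Finset.Ico n N, (a k - a (k+1)) = a n - a N := by
  induction N with
  | zero => simp [Nat.le_zero.mp h]
  | succ N ih =>
    rcases Nat.lt_or_ge n (N+1) with h' | h'
    · have hn : n ≤ N := Nat.lt_succ_iff.mp h'
      rw [Finset.sum_Ico_succ_top hn, ih hn]; ring
    · have : n = N + 1 := le_antisymm h h'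
      simp [this]

-- telescoping sum of inverse binomials
lemma sum_inv_choose (l : ℕ) (hl : 1 ≤ l) (n N : ℕ) (h : n ≤ N) :
    ∑ k ∈ Finset.Ico n N, (1:ℝ)/(Nat.choose (k+l+1) (l+1)) =
      ((l+1:ℝ)/l) * (1/(Nat.choose (n+l) l) - 1/(Nat.choose (N+l) l)) := by
  induction N with
  | zero => simp [Nat.le_zero.mp h]
  | succ N ih =>
    rcases Nat.lt_or_ge n (N+1) with h' | h'
    · have hn : n ≤ N := Nat.lt_succ_iff.mp h'
      rw [Finset.sum_Ico_succ_top hn, ih hn, choose_inv_id l N hl,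
        show N+1+l = N+l+1 by omega]
      ring
    · have : n = N + 1 := le_antisymm h h'
      simp [this]

end Aux

noncomputable section

/-- If `Δ^{d+1} μ ≥ 0`, the lower-order differences tend to `0`, and
`C(n+d, d) Δ^d μ_n ≤ B_n` with `B` nonincreasing, then
`C(n+l, l) Δ^l μ_n ≤ (d/l) B_n` for all `1 ≤ l ≤ d` and all `n`. -/
theorem fdiff_lower_order_bound (d : ℕ) (hd : 1 ≤ d) (μ : ℕ → ℝ)
    (h_pos : ∀ n, 0 ≤ fdiff^[d + 1] μ n)
    (h_lim : ∀ l, 1 ≤ l → l ≤ d → Tendsto (fdiff^[l] μ) atTop (𝓝 0))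
    (B : ℕ → ℝ) (hB : Antitone B)
    (h_top : ∀ n, (Nat.choose (n + d) d : ℝ) * fdiff^[d] μ n ≤ B n) :
    ∀ l, 1 ≤ l → l ≤ d → ∀ n,
      (Nat.choose (n + l) l : ℝ) * fdiff^[l] μ n ≤ ((d : ℝ) / l) * B n := by
  -- Δ^d μ ≥ 0
  have hsucc : ∀ l, fdiff^[l+1] μ = fdiff (fdiff^[l] μ) := by
    intro l; rw [Function.iterate_succ']; rfl
  have hd_nonneg : ∀ n, 0 ≤ fdiff^[d] μ n := by
    intro n
    have hanti : Antitone (fdiff^[d] μ) := by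
      apply antitone_nat_of_succ_le
      intro m
      have := h_pos m
      rw [hsucc d] at this
      simpa [fdiff] using this
    exact le_of_tendsto (h_lim d hd le_rfl)
      (Filter.eventually_atTop.mpr ⟨n, fun m hm => hanti hm⟩)
  have hBnn : ∀ n, 0 ≤ B n := fun n =>
    le_trans (mul_nonneg (by positivity) (hd_nonneg n)) (h_top n)
  -- the inductive step
  have step : ∀ l, 1 ≤ l → l + 1 ≤ d →
      (∀ n, (Nat.choose (n+l+1) (l+1) : ℝ) * fdiff^[l+1] μ n ≤ ((d:ℝ)/(l+1)) * B n) →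
      ∀ n, (Nat.choose (n+l) l : ℝ) * fdiff^[l] μ n ≤ ((d:ℝ)/l) * B n := by
    intro l hl hld IH n
    have hln : (0:ℝ) < l := by exact_mod_cast hl
    have hCpos : (0:ℝ) < (Nat.choose (n+l) l : ℝ) := by
      exact_mod_cast Nat.choose_pos (Nat.le_add_left l n)
    -- key bound for partial sums
    have key : ∀ N, n ≤ N →
        fdiff^[l] μ n - fdiff^[l] μ N ≤ ((d:ℝ)/l) * B n / (Nat.choose (n+l) l) := by
      intro N hN
      have tele : ∑ k ∈ Finset.Ico n N, fdiff^[l+1] μ k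
          = fdiff^[l] μ n - fdiff^[l] μ N := by
        rw [hsucc l]
        exact fdiff_telescope (fdiff^[l] μ) n N hN
      rw [← tele]
      have bound : ∀ k ∈ Finset.Ico n N, fdiff^[l+1] μ k
          ≤ ((d:ℝ)/(l+1)) * B n * (1/(Nat.choose (k+l+1) (l+1))) := by
        intro k hk
        have hkC : (0:ℝ) < (Nat.choose (k+l+1) (l+1) : ℝ) := by
          exact_mod_cast Nat.choose_pos (by omega)
        have h1 := IH k
        have hBk : B k ≤ B n := hB (Finset.mem_Ico.mp hk).1
        have h2 : (Nat.choose (k+l+1) (l+1) : ℝ) * fdiff^[l+1] μ k ≤ ((d:ℝ)/(l+1)) * B n := by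
          refine h1.trans ?_
          have : (0:ℝ) ≤ (d:ℝ)/(l+1) := by positivity
          exact mul_le_mul_of_nonneg_left hBk this
        calc fdiff^[l+1] μ k ≤ ((d:ℝ)/(l+1)) * B n / (Nat.choose (k+l+1) (l+1)) := by
              rw [le_div_iff₀ hkC, mul_comm]; exact h2
          _ = ((d:ℝ)/(l+1)) * B n * (1/(Nat.choose (k+l+1) (l+1))) := by ring
      calc ∑ k ∈ Finset.Ico n N, fdiff^[l+1] μ k
          ≤ ∑ k ∈ Finset.Ico n N, ((d:ℝ)/(l+1)) * B n * (1/(Nat.choose (k+l+1) (l+1))) :=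
            Finset.sum_le_sum bound
        _ = ((d:ℝ)/(l+1)) * B n * ∑ k ∈ Finset.Ico n N, (1/(Nat.choose (k+l+1) (l+1)) : ℝ) := by
            rw [Finset.mul_sum]
        _ = ((d:ℝ)/(l+1)) * B n * (((l+1:ℝ)/l) * (1/(Nat.choose (n+l) l) - 1/(Nat.choose (N+l) l))) := by
            rw [sum_inv_choose l hl n N hN]
        _ ≤ ((d:ℝ)/(l+1)) * B n * (((l+1:ℝ)/l) * (1/(Nat.choose (n+l) l))) := by
            have h1 : (0:ℝ) ≤ ((d:ℝ)/(l+1)) * B n := by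
              have := hBnn n; positivity
            have h2 : (0:ℝ) ≤ (1:ℝ)/(Nat.choose (N+l) l) := by positivity
            have h3 : (0:ℝ) ≤ (l+1:ℝ)/l := by positivity
            refine mul_le_mul_of_nonneg_left ?_ h1
            refine mul_le_mul_of_nonneg_left ?_ h3
            linarith
        _ = ((d:ℝ)/l) * B n / (Nat.choose (n+l) l) := by
            field_simp
    -- take the limit N → ∞
    have hlim : Tendsto (fun N => fdiff^[l] μ n - fdiff^[l] μ N) atTop
        (𝓝 (fdiff^[l] μ n)) := by
      have := (tendsto_const_nhds (x := fdiff^[l] μ n) (f := atTop (α := ℕ))).sub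
        (h_lim l hl (by omega))
      simpa using this
    have : fdiff^[l] μ n ≤ ((d:ℝ)/l) * B n / (Nat.choose (n+l) l) :=
      le_of_tendsto hlim (Filter.eventually_atTop.mpr ⟨n, key⟩)
    rw [le_div_iff₀ hCpos] at this
    linarith [this]
  -- downward induction
  have main : ∀ j, ∀ l, 1 ≤ l → l + j = d → ∀ n,
      (Nat.choose (n+l) l : ℝ) * fdiff^[l] μ n ≤ ((d:ℝ)/l) * B n := by
    intro j
    induction j with
    | zero =>
      intro l hl hld n
      have hld' : l = d := by omega
      subst hld'
      have h1 : ((l:ℝ)/(l:ℝ)) = 1 := by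
        have : (0:ℝ) < l := by exact_mod_cast hl
        field_simp
      rw [h1, one_mul]
      exact h_top n
    | succ j ih =>
      intro l hl hld n
      exact step l hl (by omega)
        (fun m => by
          have h := ih (l+1) (by omega) (by omega) m
          rw [show m + (l+1) = m + l + 1 from by omega] at h
          push_cast at h ⊢
          exact h) n
  intro l hl hld n
  exact main (d - l) l hl (by omega) n


end
end
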